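/- Let g ≥ 1, q ≥ 1, and 1 ≤ k ≤ g be integers, and let δ_1, …, δ_g be positive integers such that q·g ≥ (g−i)·δ_i for every 1 ≤ i ≤ g and such that g!·∏_{i=1}^{g} δ_i > (q·g)^g. Then g!·∏_{i=1}^{g} δ_i > q^k · (g−k)! · (∏_{i=1}^{g−k} δ_i) · g^k · C(g−1, k−1), where C(g−1, k−1) denotes the binomial coefficient. -/

import Mathlib

/-! Since `(g - 1)⋯(k) = (g - k)! · C(g - 1, k - 1)`, the right-hand side equals
`(q g)^k · ∏_{i ≤ g - k} (g - i) δ_i`, and each factor `(g - i) δ_i` is at most `q g`.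
So the right-hand side is at most `(q g)^g`, which is below the left-hand side by assumption. -/

open Finset
open scoped Nat

theorem Nat.prod_Icc_sub_eq_descFactorial (n : ℕ) :
    ∀ m, ∏ i ∈ Icc 1 m, (n - i) = (n - 1).descFactorial m
  | 0 => rfl
  | m + 1 => by
    rw [prod_Icc_succ_top (by omega), Nat.prod_Icc_sub_eq_descFactorial n m,
      Nat.descFactorial_succ, mul_comm, Nat.sub_sub, Nat.add_comm 1 m]

theorem Nat.descFactorial_mul_prod_le_pow {n m c : ℕ} (δ : ℕ → ℕ)
    (h : ∀ i ∈ Icc 1 m, (n - i) * δ i ≤ c) :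
    (n - 1).descFactorial m * ∏ i ∈ Icc 1 m, δ i ≤ c ^ m := by
  calc (n - 1).descFactorial m * ∏ i ∈ Icc 1 m, δ i
      = ∏ i ∈ Icc 1 m, (n - i) * δ i := by
        rw [prod_mul_distrib, Nat.prod_Icc_sub_eq_descFactorial]
    _ ≤ ∏ _i ∈ Icc 1 m, c := prod_le_prod' h
    _ = c ^ m := by rw [prod_const, Nat.card_Icc, Nat.add_sub_cancel]

theorem Nat.descFactorial_sub_eq_factorial_mul_choose {n j : ℕ} (h : j ≤ n) :
    n.descFactorial (n - j) = (n - j)! * n.choose j := by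
  rw [Nat.descFactorial_eq_factorial_mul_choose, Nat.choose_symm h]

theorem helmke_induction_chain_general (g q k : ℕ)
    (hk1 : 1 ≤ k) (hk2 : k ≤ g)
    (δ : ℕ → ℕ)
    (hbound : ∀ i, 1 ≤ i → i ≤ g → q * g ≥ (g - i) * δ i)
    (hdeg : Nat.factorial g * ∏ i ∈ Finset.Icc 1 g, δ i > (q * g) ^ g) :
    Nat.factorial g * ∏ i ∈ Finset.Icc 1 g, δ i >
      q ^ k * Nat.factorial (g - k) * (∏ i ∈ Finset.Icc 1 (g - k), δ i) *
        g ^ k * Nat.choose (g - 1) (k - 1) := by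
  have hdesc : (g - 1).descFactorial (g - k) = (g - k)! * (g - 1).choose (k - 1) := by
    have := Nat.descFactorial_sub_eq_factorial_mul_choose (show k - 1 ≤ g - 1 by omega)
    rwa [show g - 1 - (k - 1) = g - k by omega] at this
  have hprod : (g - 1).descFactorial (g - k) * ∏ i ∈ Icc 1 (g - k), δ i ≤ (q * g) ^ (g - k) :=
    Nat.descFactorial_mul_prod_le_pow δ fun i hi => by
      rw [mem_Icc] at hi
      exact hbound i hi.1 (by omega)
  refine lt_of_le_of_lt ?_ hdeg
  calc q ^ k * (g - k)! * (∏ i ∈ Icc 1 (g - k), δ i) * g ^ k * (g - 1).choose (k - 1)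
      = (q * g) ^ k * ((g - 1).descFactorial (g - k) * ∏ i ∈ Icc 1 (g - k), δ i) := by
        rw [hdesc, mul_pow]; ring
    _ ≤ (q * g) ^ k * (q * g) ^ (g - k) := Nat.mul_le_mul_left _ hprod
    _ = (q * g) ^ g := by rw [← pow_add, Nat.add_sub_cancel' hk2]

/-- For integers `g, q ≥ 1`, `1 ≤ k ≤ g`, and positive integers `δ_i` with
`q·g ≥ (g-i)·δ_i` for all `1 ≤ i ≤ g` and `g!·δ_1⋯δ_g > (q·g)^g`, one has
`g!·δ_1⋯δ_g > q^k · (g-k)! · δ_1⋯δ_{g-k} · g^k · C(g-1, k-1)`. -/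
theorem helmke_induction_chain (g q k : ℕ) (hg : 1 ≤ g) (hq : 1 ≤ q)
    (hk1 : 1 ≤ k) (hk2 : k ≤ g)
    (δ : ℕ → ℕ) (hpos : ∀ i, 1 ≤ i → i ≤ g → 0 < δ i)
    (hbound : ∀ i, 1 ≤ i → i ≤ g → q * g ≥ (g - i) * δ i)
    (hdeg : Nat.factorial g * ∏ i ∈ Finset.Icc 1 g, δ i > (q * g) ^ g) :
    Nat.factorial g * ∏ i ∈ Finset.Icc 1 g, δ i >
      q ^ k * Nat.factorial (g - k) * (∏ i ∈ Finset.Icc 1 (g - k), δ i) *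
        g ^ k * Nat.choose (g - 1) (k - 1) :=
  helmke_induction_chain_general g q k hk1 hk2 δ hbound hdeg
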